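/- In Pic′ define the symmetry roots α₀ = H_p−E₁−E₂, α₁ = H_q−E₅−E₆, α₂ = H_p−E₃−E₄, α₃ = H_q−E₇−E₈, δ = α₀+α₁+α₂+α₃, the reflections w_i(C) = C + (C•α_i)α_i for i = 0,1,2,3, and the lattice automorphisms σ₂, σ₃ given by the basis permutations exchanging E₁↔E₃, E₂↔E₄ (for σ₂) and E₅↔E₇, E₆↔E₈ (for σ₃). Then the composition U = σ₃ ∘ σ₂ ∘ w₁ ∘ w₂ ∘ w₀ ∘ w₁ acts on the symmetry roots as the translation ⟨0,−1,0,1⟩: U(α₀) = α₀, U(α₁) = α₁ − δ, U(α₂) = α₂, U(α₃) = α₃ + δ. -/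

import Mathlib

/-!
Every map in the composition preserves the root lattice `⊕ ℤ αᵢ` and acts on it through root
coordinates: since `αⱼ • αᵢ = -Aⱼᵢ` for the Cartan matrix `A` of `A₃⁽¹⁾`, the reflection `wᵢ`
sends `∑ cⱼ αⱼ` to the class with coordinates `c - (c A)ᵢ eᵢ`, while `σ₂` and `σ₃` act as the
diagram automorphisms `α₀ ↔ α₂` and `α₁ ↔ α₃`. Each of the four identities thus becomes an
identity between integer vectors in `ℤ⁴`.
-/

/-- The Picard lattice `Pic′` of the standard `D₅⁽¹⁾` Sakai surface: the free `ℤ`-module of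
rank 10 with basis `H_q, H_p, E₁, …, E₈`. -/
abbrev Pic' : Type := Fin 10 → ℤ

/-- The `i`-th basis vector of `Pic′`. -/
def bv (i : Fin 10) : Pic' := fun j => if j = i then 1 else 0

/-- The class `H_q`. -/
def Hq : Pic' := bv 0

/-- The class `H_p`. -/
def Hp : Pic' := bv 1

/-- The class `E (k)` of the exceptional divisor `E_{k+1}` (so `E 0 = E₁`, …, `E 7 = E₈`). -/
def E (k : Fin 8) : Pic' := bv ⟨k.val + 2, by omega⟩

/-- The intersection form on `Pic′`: `H_q•H_q = H_p•H_p = 0`, `H_q•H_p = 1`,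
`H_q•E_j = H_p•E_j = 0`, `E_i•E_j = −δ_{ij}`. -/
def inter (v w : Pic') : ℤ :=
  v 0 * w 1 + v 1 * w 0 - ∑ k : Fin 8, v ⟨k.val + 2, by omega⟩ * w ⟨k.val + 2, by omega⟩

/-- The standard symmetry root basis of type `A₃⁽¹⁾`:
`α₀ = H_p−E₁−E₂`, `α₁ = H_q−E₅−E₆`, `α₂ = H_p−E₃−E₄`, `α₃ = H_q−E₇−E₈`. -/
def alpha : Fin 4 → Pic' :=
  ![Hp - E 0 - E 1, Hq - E 4 - E 5, Hp - E 2 - E 3, Hq - E 6 - E 7]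

/-- The null root `δ = α₀ + α₁ + α₂ + α₃`. -/
def nullRoot : Pic' := alpha 0 + alpha 1 + alpha 2 + alpha 3

/-- The reflection `C ↦ C + (C•r)r` in a class `r`. -/
def reflIn (r C : Pic') : Pic' := C + inter C r • r

/-- The reflection `w_i` in the symmetry root `α_i`. -/
def w (i : Fin 4) : Pic' → Pic' := reflIn (alpha i)

/-- The lattice map induced by a permutation `s` of the basis indices (for an involution `s`,
this sends the basis vector `e_i` to `e_{s i}`). -/
def permMap (s : Fin 10 → Fin 10) (v : Pic') : Pic' := fun j => v (s j)

/-- The Dynkin diagram automorphism `σ₂`: the basis permutation exchanging `E₁↔E₃`, `E₂↔E₄`. -/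
def sigma2 : Pic' → Pic' := permMap ![0, 1, 4, 5, 2, 3, 6, 7, 8, 9]

/-- The Dynkin diagram automorphism `σ₃`: the basis permutation exchanging `E₅↔E₇`, `E₆↔E₈`. -/
def sigma3 : Pic' → Pic' := permMap ![0, 1, 2, 3, 4, 5, 8, 9, 6, 7]

/-- The Dynkin diagram automorphism `σ₁ = π₁ ∘ w_ρ`, where `ρ = H_q − H_p` and `π₁` is the basis
permutation exchanging `E₁↔E₇`, `E₂↔E₈`, `E₃↔E₅`, `E₄↔E₆`. -/
def sigma1 : Pic' → Pic' := fun v =>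
  permMap ![0, 1, 8, 9, 6, 7, 4, 5, 2, 3] (reflIn (Hq - Hp) v)

open Matrix

/-- Minus the intersection matrix of the symmetry roots: the generalized Cartan matrix of type
`A₃⁽¹⁾`, whose Dynkin diagram is the cycle `α₀ – α₁ – α₂ – α₃ – α₀`. -/
def affineCartanA3 : Matrix (Fin 4) (Fin 4) ℤ :=
  !![2, -1, 0, -1; -1, 2, -1, 0; 0, -1, 2, -1; -1, 0, -1, 2]

theorem inter_alpha_alpha (i j : Fin 4) : inter (alpha i) (alpha j) = -affineCartanA3 i j := by
  revert i j; decide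

@[simps]
def interLeft (r : Pic') : Pic' →ₗ[ℤ] ℤ where
  toFun v := inter v r
  map_add' u v := by simp only [inter, Pi.add_apply, add_mul, Finset.sum_add_distrib]; ring
  map_smul' n v := by
    simp only [inter, Pi.smul_apply, smul_eq_mul, mul_assoc, ← Finset.mul_sum, RingHom.id_apply]
    ring

def rootClass : (Fin 4 → ℤ) →ₗ[ℤ] Pic' := Fintype.linearCombination ℤ alpha

theorem rootClass_single (i : Fin 4) : rootClass (Pi.single i 1) = alpha i := by
  rw [rootClass, Fintype.linearCombination_apply_single, one_smul]

theorem rootClass_one : rootClass 1 = nullRoot := by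
  simp [rootClass, Fintype.linearCombination_apply, Fin.sum_univ_four, nullRoot]

theorem inter_rootClass_alpha (c : Fin 4 → ℤ) (i : Fin 4) :
    inter (rootClass c) (alpha i) = -(c ᵥ* affineCartanA3) i := by
  change interLeft (alpha i) (Fintype.linearCombination ℤ alpha c) = _
  simp only [Fintype.linearCombination_apply, map_sum, map_zsmul, smul_eq_mul, interLeft_apply,
    inter_alpha_alpha, vecMul, dotProduct, mul_neg, Finset.sum_neg_distrib]

theorem w_rootClass (i : Fin 4) (c : Fin 4 → ℤ) :
    w i (rootClass c) = rootClass (c - Pi.single i ((c ᵥ* affineCartanA3) i)) := by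
  rw [w, reflIn, inter_rootClass_alpha, map_sub, rootClass, Fintype.linearCombination_apply_single,
    neg_smul, sub_eq_add_neg]

theorem permMap_rootClass (s : Fin 10 → Fin 10) (π : Equiv.Perm (Fin 4))
    (h : ∀ i, permMap s (alpha i) = alpha (π i)) (c : Fin 4 → ℤ) :
    permMap s (rootClass c) = rootClass (c ∘ π.symm) := by
  change LinearMap.funLeft ℤ ℤ s (rootClass c) = _
  simp only [rootClass, Fintype.linearCombination_apply, map_sum, map_zsmul]
  change ∑ i, c i • permMap s (alpha i) = _
  simp only [h, Function.comp_apply]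
  exact (π.symm.sum_comp _).symm.trans (by simp only [Equiv.apply_symm_apply])

theorem sigma2_alpha (i : Fin 4) : sigma2 (alpha i) = alpha (Equiv.swap 0 2 i) := by
  revert i; decide

theorem sigma3_alpha (i : Fin 4) : sigma3 (alpha i) = alpha (Equiv.swap 1 3 i) := by
  revert i; decide

theorem sigma2_rootClass (c : Fin 4 → ℤ) :
    sigma2 (rootClass c) = rootClass (c ∘ Equiv.swap 0 2) := by
  rw [← Equiv.symm_swap]; exact permMap_rootClass _ _ sigma2_alpha c

theorem sigma3_rootClass (c : Fin 4 → ℤ) :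
    sigma3 (rootClass c) = rootClass (c ∘ Equiv.swap 1 3) := by
  rw [← Equiv.symm_swap]; exact permMap_rootClass _ _ sigma3_alpha c

/-- The composition `U = σ₃ ∘ σ₂ ∘ w₁ ∘ w₂ ∘ w₀ ∘ w₁` (the decomposition of the
map induced by the Laguerre-weight recurrence) acts on the symmetry roots as the translation
`⟨0,−1,0,1⟩`. -/
theorem laguerre_translation_on_symmetry_roots :
    let U : Pic' → Pic' := fun v => sigma3 (sigma2 (w 1 (w 2 (w 0 (w 1 v)))))
    U (alpha 0) = alpha 0 ∧ U (alpha 1) = alpha 1 - nullRoot ∧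
      U (alpha 2) = alpha 2 ∧ U (alpha 3) = alpha 3 + nullRoot := by
  intro U
  simp only [U, ← rootClass_single, ← rootClass_one, w_rootClass, sigma2_rootClass,
    sigma3_rootClass, ← map_sub, ← map_add]
  refine ⟨?_, ?_, ?_, ?_⟩ <;> exact congrArg rootClass (by decide)
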